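/- arXiv:2410.20108 — 3 statements merged into one kernel-verified Lean document; each statement's English description precedes it below -/
import Mathlib

section
/- Let F⁽¹⁾ = F⁽⁰⁾ ≥ 0 and let {F⁽ᵏ⁾} be a sequence of nonnegative reals satisfying F⁽ᵏ⁺¹⁾ ≤ γ₁ F⁽ᵏ⁾ + γ₂ F⁽ᵏ⁻¹⁾ for all k ≥ 1, where γ₂ ≥ 0 and γ₁ + γ₂ < 1. Define q = (γ₁ + √(γ₁² + 4γ₂))/2 if γ₂ > 0 and q = γ₁ if γ₂ = 0, and τ = q − γ₁. Then for all k ≥ 0, F⁽ᵏ⁺¹⁾ ≤ qᵏ(1 + τ) F⁽⁰⁾. -/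
/-!
If `q ≥ 0` is a root of `x² = γ₁ x + γ₂` with `τ := q - γ₁ ≥ 0`, then `γ₁ = q - τ` and `γ₂ = q τ`,
so the recursion gives `F (k + 2) + τ F (k + 1) ≤ q (F (k + 1) + τ F k)`: the potential
`F (k + 1) + τ F k` decays geometrically with ratio `q`, starting from `(1 + τ) F 0`.
For `γ₂ > 0` the larger root works; for `γ₂ = 0` take `q = γ₁`, unless `γ₁ < 0`, where the
recursion forces `F 0 = 0` and the root `q = 0` gives `F (k + 1) ≤ 0`.
-/

section CharacteristicRoot

variable {F : ℕ → ℝ} {γ₁ γ₂ q : ℝ}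

lemma add_mul_le_pow_mul_of_rec (h10 : F 1 = F 0) (hq : 0 ≤ q)
    (hroot : γ₂ = q * (q - γ₁))
    (hrec : ∀ k ≥ 1, F (k + 1) ≤ γ₁ * F k + γ₂ * F (k - 1)) (k : ℕ) :
    F (k + 1) + (q - γ₁) * F k ≤ q ^ k * ((1 + (q - γ₁)) * F 0) := by
  induction k with
  | zero => simp only [zero_add, h10, pow_zero]; linarith
  | succ n ih =>
    have hstep := hrec (n + 1) (Nat.le_add_left 1 n)
    rw [Nat.add_sub_cancel, hroot] at hstep
    calc F (n + 1 + 1) + (q - γ₁) * F (n + 1)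
        ≤ q * (F (n + 1) + (q - γ₁) * F n) := by linarith
      _ ≤ q * (q ^ n * ((1 + (q - γ₁)) * F 0)) := by gcongr
      _ = q ^ (n + 1) * ((1 + (q - γ₁)) * F 0) := by ring

lemma le_pow_mul_of_rec (hnn : ∀ k, 0 ≤ F k) (h10 : F 1 = F 0) (hq : 0 ≤ q)
    (hγ₁q : γ₁ ≤ q) (hroot : γ₂ = q * (q - γ₁))
    (hrec : ∀ k ≥ 1, F (k + 1) ≤ γ₁ * F k + γ₂ * F (k - 1)) (k : ℕ) :
    F (k + 1) ≤ q ^ k * (1 + (q - γ₁)) * F 0 := by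
  have hτF : 0 ≤ (q - γ₁) * F k := mul_nonneg (sub_nonneg.mpr hγ₁q) (hnn k)
  linarith [add_mul_le_pow_mul_of_rec h10 hq hroot hrec k]

end CharacteristicRoot

lemma larger_root_spec {γ₁ γ₂ q : ℝ} (hγ₂ : 0 ≤ γ₂)
    (hq : q = (γ₁ + Real.sqrt (γ₁ ^ 2 + 4 * γ₂)) / 2) :
    0 ≤ q ∧ γ₁ ≤ q ∧ γ₂ = q * (q - γ₁) := by
  subst hq
  have hsq : Real.sqrt (γ₁ ^ 2 + 4 * γ₂) ^ 2 = γ₁ ^ 2 + 4 * γ₂ := Real.sq_sqrt (by positivity)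
  have habs : |γ₁| ≤ Real.sqrt (γ₁ ^ 2 + 4 * γ₂) := Real.abs_le_sqrt (by linarith)
  refine ⟨?_, ?_, ?_⟩
  · linarith [neg_abs_le γ₁]
  · linarith [le_abs_self γ₁]
  · linear_combination (-1 / 4 : ℝ) * hsq

theorem stmt_1_general (F : ℕ → ℝ) (γ₁ γ₂ : ℝ)
    (hnn : ∀ k, 0 ≤ F k) (h10 : F 1 = F 0)
    (hγ₂ : 0 ≤ γ₂)
    (hrec : ∀ k ≥ 1, F (k + 1) ≤ γ₁ * F k + γ₂ * F (k - 1)) :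
    ∀ k : ℕ,
      F (k + 1) ≤
        (if 0 < γ₂ then (γ₁ + Real.sqrt (γ₁ ^ 2 + 4 * γ₂)) / 2 else γ₁) ^ k *
          (1 + ((if 0 < γ₂ then (γ₁ + Real.sqrt (γ₁ ^ 2 + 4 * γ₂)) / 2 else γ₁) - γ₁)) * F 0 := by
  intro k
  split_ifs with hpos
  · obtain ⟨hq, hγ₁q, hroot⟩ := larger_root_spec hγ₂ rfl
    exact le_pow_mul_of_rec hnn h10 hq hγ₁q hroot hrec k
  · obtain rfl : γ₂ = 0 := le_antisymm (not_lt.mp hpos) hγ₂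
    rcases le_or_gt 0 γ₁ with hγ₁ | hγ₁
    · exact le_pow_mul_of_rec hnn h10 hγ₁ le_rfl (by ring) hrec k
    · have hF0 : F 0 = 0 := by
        have h2 := hrec 1 le_rfl
        rw [h10] at h2
        nlinarith [hnn 0, hnn 2]
      simpa [hF0] using le_pow_mul_of_rec hnn h10 le_rfl hγ₁.le (by ring) hrec k

theorem stmt_1 (F : ℕ → ℝ) (γ₁ γ₂ : ℝ)
    (hnn : ∀ k, 0 ≤ F k) (h10 : F 1 = F 0)
    (hγ₂ : 0 ≤ γ₂) (hsum : γ₁ + γ₂ < 1)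
    (hrec : ∀ k ≥ 1, F (k + 1) ≤ γ₁ * F k + γ₂ * F (k - 1)) :
    ∀ k : ℕ,
      F (k + 1) ≤
        (if 0 < γ₂ then (γ₁ + Real.sqrt (γ₁ ^ 2 + 4 * γ₂)) / 2 else γ₁) ^ k *
          (1 + ((if 0 < γ₂ then (γ₁ + Real.sqrt (γ₁ ^ 2 + 4 * γ₂)) / 2 else γ₁) - γ₁)) * F 0 :=
  stmt_1_general F γ₁ γ₂ hnn h10 hγ₂ hrec
end

section
/- Let A ∈ R^{m×n}, b ∈ R^m, x ∈ R^n, set s = Aᵀ(b − Ax), τ = { j : |s_j|² ≥ ‖s‖²/n } and η = Σ_{j∈τ} s_j e_j. If s ≠ 0 then Aη ≠ 0. -/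
/-!
With `r = b - A x` we have `s ⬝ᵥ η = (Aᵀ r) ⬝ᵥ η = r ⬝ᵥ A η`, so `A η = 0` would force
`s ⬝ᵥ η = ∑_{j ∈ τ} s_j² = 0`. But some `s_j²` is at least the mean `‖s‖² / n > 0`, and that
`j` lies in `τ`.
-/

open Matrix BigOperators Finset

section

variable {ι : Type*} [Fintype ι]

theorem dotProduct_sum_smul_single {R : Type*} [CommSemiring R] [DecidableEq ι]
    (v c : ι → R) (τ : Finset ι) :
    v ⬝ᵥ ∑ j ∈ τ, c j • (Pi.single j 1 : ι → R) = ∑ j ∈ τ, c j * v j := by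
  simp only [dotProduct_sum, dotProduct_smul, dotProduct_single, mul_one, smul_eq_mul]

theorem exists_sq_ge_mean_sq [Nonempty ι] (s : ι → ℝ) :
    ∃ j, (∑ i, s i ^ 2) / Fintype.card ι ≤ s j ^ 2 := by
  have hcard : (Fintype.card ι : ℝ) ≠ 0 := Nat.cast_ne_zero.mpr Fintype.card_ne_zero
  obtain ⟨j, -, hj⟩ := exists_le_of_sum_le (s := univ) univ_nonempty
    (f := fun _ => (∑ i, s i ^ 2) / Fintype.card ι) (g := fun i => s i ^ 2)
    (by rw [sum_const, card_univ, nsmul_eq_mul, mul_div_cancel₀ _ hcard])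
  exact ⟨j, hj⟩

theorem sum_sq_filter_ge_mean_pos {s : ι → ℝ} (hs : s ≠ 0) :
    0 < ∑ j ∈ univ.filter (fun j => s j ^ 2 ≥ (∑ i, s i ^ 2) / Fintype.card ι), s j ^ 2 := by
  obtain ⟨k, hk⟩ := Function.ne_iff.mp hs
  have : Nonempty ι := ⟨k⟩
  have htotal : 0 < ∑ i, s i ^ 2 :=
    sum_pos' (fun i _ => sq_nonneg (s i)) ⟨k, mem_univ k, sq_pos_of_ne_zero hk⟩
  obtain ⟨j, hj⟩ := exists_sq_ge_mean_sq s
  exact sum_pos' (fun i _ => sq_nonneg (s i))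
    ⟨j, by simpa using hj, (div_pos htotal (by positivity)).trans_le hj⟩

end

theorem stmt_5 {m n : ℕ} (A : Matrix (Fin m) (Fin n) ℝ) (b : Fin m → ℝ) (x : Fin n → ℝ) :
    let s : Fin n → ℝ := Aᵀ.mulVec (b - A.mulVec x)
    let τ : Finset (Fin n) := Finset.univ.filter fun j => (s j) ^ 2 ≥ (∑ i, s i ^ 2) / n
    let η : Fin n → ℝ := ∑ j ∈ τ, s j • (Pi.single j 1 : Fin n → ℝ)
    s ≠ 0 → A.mulVec η ≠ 0 := by
  intro s τ η hs hAη
  have hpos : 0 < ∑ j ∈ τ, s j ^ 2 := by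
    simpa only [Fintype.card_fin] using sum_sq_filter_ge_mean_pos hs
  have hdot : s ⬝ᵥ η = ∑ j ∈ τ, s j ^ 2 := by
    simp only [η, dotProduct_sum_smul_single, sq]
  have hzero : s ⬝ᵥ η = 0 := by
    rw [show s = (b - A *ᵥ x) ᵥ* A from mulVec_transpose A _, ← dotProduct_mulVec, hAη,
      dotProduct_zero]
  linarith
end

section
/- Let A ∈ R^{m×n} have full column rank, b ∈ R^m, x⋆ = A†b, and x ∈ R^n with s = Aᵀ(b − Ax) ≠ 0. Let τ = { j : |s_j|² ≥ ‖s‖²/n }, η = Σ_{j∈τ} s_j e_j, and P = (Aη ηᵀAᵀ)/‖Aη‖². Then ‖P(A(x − x⋆))‖² ≥ (|τ| σ_min(A)²)/(n σ_max(A_τ)²) · ‖A(x − x⋆)‖², where A_τ is the column submatrix of A indexed by τ. -/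
open Matrix BigOperators

noncomputable def sqnorm {k : Type*} [Fintype k] (v : k → ℝ) : ℝ := ∑ i, v i ^ 2

noncomputable def enorm' {k : Type*} [Fintype k] (v : k → ℝ) : ℝ := Real.sqrt (sqnorm v)

noncomputable def sigmaMin {m n : Type*} [Fintype m] [Fintype n] (G : Matrix m n ℝ) : ℝ :=
  sInf {r | ∃ x : n → ℝ, enorm' x = 1 ∧ r = enorm' (G.mulVec x)}

noncomputable def sigmaMax {m n : Type*} [Fintype m] [Fintype n] (G : Matrix m n ℝ) : ℝ :=
  sSup {r | ∃ x : n → ℝ, enorm' x = 1 ∧ r = enorm' (G.mulVec x)}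

section helpers

variable {k : Type*} [Fintype k]

lemma sqnorm_nonneg (v : k → ℝ) : 0 ≤ sqnorm v :=
  Finset.sum_nonneg fun _ _ => sq_nonneg _

lemma enorm'_nonneg (v : k → ℝ) : 0 ≤ enorm' v := Real.sqrt_nonneg _

lemma enorm'_sq (v : k → ℝ) : enorm' v ^ 2 = sqnorm v := Real.sq_sqrt (sqnorm_nonneg v)

lemma sqnorm_smul (c : ℝ) (v : k → ℝ) : sqnorm (c • v) = c ^ 2 * sqnorm v := by
  simp [sqnorm, Finset.mul_sum, mul_pow]

lemma enorm'_smul (c : ℝ) (v : k → ℝ) : enorm' (c • v) = |c| * enorm' v := by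
  rw [enorm', sqnorm_smul, Real.sqrt_mul (sq_nonneg c), Real.sqrt_sq_eq_abs, enorm']

lemma sqnorm_pos {v : k → ℝ} (hv : v ≠ 0) : 0 < sqnorm v := by
  rcases Function.ne_iff.mp hv with ⟨i, hi⟩
  exact Finset.sum_pos' (fun _ _ => sq_nonneg _)
    ⟨i, Finset.mem_univ i, pow_two_pos_of_ne_zero hi⟩

lemma enorm'_pos {v : k → ℝ} (hv : v ≠ 0) : 0 < enorm' v :=
  Real.sqrt_pos.mpr (sqnorm_pos hv)

lemma sqnorm_zero : sqnorm (0 : k → ℝ) = 0 := by simp [sqnorm]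

lemma enorm'_zero : enorm' (0 : k → ℝ) = 0 := by simp [enorm', sqnorm_zero]

lemma dotProduct_self_eq_sqnorm (v : k → ℝ) : v ⬝ᵥ v = sqnorm v := by
  simp [dotProduct, sqnorm, sq]

variable {m n : Type*} [Fintype m] [Fintype n]

lemma sigmaMin_nonneg (G : Matrix m n ℝ) : 0 ≤ sigmaMin G :=
  Real.sInf_nonneg (by rintro r ⟨y, -, rfl⟩; exact enorm'_nonneg _)

lemma sigmaMin_mul_le (G : Matrix m n ℝ) (v : n → ℝ) :
    sigmaMin G * enorm' v ≤ enorm' (G.mulVec v) := by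
  rcases eq_or_ne v 0 with rfl | hv
  · simp [enorm'_zero, Matrix.mulVec_zero]
  · have hc : 0 < enorm' v := enorm'_pos hv
    have hmem : (enorm' v)⁻¹ * enorm' (G.mulVec v) ∈
        {r | ∃ x : n → ℝ, enorm' x = 1 ∧ r = enorm' (G.mulVec x)} := by
      refine ⟨(enorm' v)⁻¹ • v, ?_, ?_⟩
      · rw [enorm'_smul, abs_of_nonneg (by positivity), inv_mul_cancel₀ hc.ne']
      · rw [Matrix.mulVec_smul, enorm'_smul, abs_of_nonneg (by positivity)]
    have hbdd : BddBelow {r | ∃ x : n → ℝ, enorm' x = 1 ∧ r = enorm' (G.mulVec x)} :=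
      ⟨0, by rintro r ⟨y, -, rfl⟩; exact enorm'_nonneg _⟩
    have := csInf_le hbdd hmem
    calc sigmaMin G * enorm' v ≤ ((enorm' v)⁻¹ * enorm' (G.mulVec v)) * enorm' v :=
          mul_le_mul_of_nonneg_right this hc.le
      _ = enorm' (G.mulVec v) := by field_simp
    
lemma sqnorm_mulVec_le (G : Matrix m n ℝ) (v : n → ℝ) :
    sqnorm (G.mulVec v) ≤ (∑ i, ∑ j, G i j ^ 2) * sqnorm v := by
  rw [sqnorm, Finset.sum_mul]
  refine Finset.sum_le_sum fun i _ => ?_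
  exact Finset.sum_mul_sq_le_sq_mul_sq Finset.univ (fun j => G i j) v

lemma le_sigmaMax (G : Matrix m n ℝ) (v : n → ℝ) :
    enorm' (G.mulVec v) ≤ sigmaMax G * enorm' v := by
  rcases eq_or_ne v 0 with rfl | hv
  · simp [enorm'_zero, Matrix.mulVec_zero]
  · have hc : 0 < enorm' v := enorm'_pos hv
    have hbdd : BddAbove {r | ∃ x : n → ℝ, enorm' x = 1 ∧ r = enorm' (G.mulVec x)} := by
      refine ⟨Real.sqrt (∑ i, ∑ j, G i j ^ 2), ?_⟩
      rintro r ⟨y, hy, rfl⟩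
      have h1 : sqnorm (G.mulVec y) ≤ (∑ i, ∑ j, G i j ^ 2) := by
        have := sqnorm_mulVec_le G y
        rwa [← enorm'_sq y, hy, one_pow, mul_one] at this
      exact Real.sqrt_le_sqrt h1
    have hmem : (enorm' v)⁻¹ * enorm' (G.mulVec v) ∈
        {r | ∃ x : n → ℝ, enorm' x = 1 ∧ r = enorm' (G.mulVec x)} := by
      refine ⟨(enorm' v)⁻¹ • v, ?_, ?_⟩
      · rw [enorm'_smul, abs_of_nonneg (by positivity), inv_mul_cancel₀ hc.ne']
      · rw [Matrix.mulVec_smul, enorm'_smul, abs_of_nonneg (by positivity)]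
    have := le_csSup hbdd hmem
    calc enorm' (G.mulVec v) = ((enorm' v)⁻¹ * enorm' (G.mulVec v)) * enorm' v := by field_simp
      _ ≤ sigmaMax G * enorm' v := mul_le_mul_of_nonneg_right this hc.le

lemma sqnorm_neg (v : k → ℝ) : sqnorm (-v) = sqnorm v := by simp [sqnorm]

end helpers

theorem stmt_13 {m n : ℕ} (A : Matrix (Fin m) (Fin n) ℝ) (hrank : A.rank = n)
    (b : Fin m → ℝ) (xstar : Fin n → ℝ)
    (hstar : (Aᵀ * A).mulVec xstar = Aᵀ.mulVec b)
    (x : Fin n → ℝ) :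
    let s : Fin n → ℝ := Aᵀ.mulVec (b - A.mulVec x)
    let τ : Finset (Fin n) := Finset.univ.filter fun j => (s j) ^ 2 ≥ sqnorm s / n
    let η : Fin n → ℝ := ∑ j ∈ τ, s j • (Pi.single j 1 : Fin n → ℝ)
    let P : Matrix (Fin m) (Fin m) ℝ :=
      (sqnorm (A.mulVec η))⁻¹ • Matrix.vecMulVec (A.mulVec η) (A.mulVec η)
    let Aτ : Matrix (Fin m) ↥τ ℝ := A.submatrix id (fun j : ↥τ => (j : Fin n))
    s ≠ 0 →
      sqnorm (P.mulVec (A.mulVec (x - xstar))) ≥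
        (τ.card : ℝ) * sigmaMin A ^ 2 / (n * sigmaMax Aτ ^ 2) *
          sqnorm (A.mulVec (x - xstar)) := by
  intro s τ η P Aτ hs
  set r : Fin m → ℝ := A.mulVec (x - xstar) with hr_def
  rcases (sqnorm_nonneg r).eq_or_lt with hR0 | hR
  · rw [ge_iff_le, ← hR0, mul_zero]
    exact sqnorm_nonneg _
  have hn : 0 < n := by
    rcases Nat.eq_zero_or_pos n with rfl | h
    · exact absurd (funext fun i => i.elim0) hs
    · exact h
  have hnR : (0:ℝ) < n := by exact_mod_cast hn
  set S : ℝ := sqnorm s with hS_def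
  have hS : 0 < S := sqnorm_pos hs
  have hη : ∀ j, η j = if j ∈ τ then s j else 0 := by
    intro j
    show (∑ j' ∈ τ, s j' • (Pi.single j' 1 : Fin n → ℝ)) j = _
    rw [Finset.sum_apply]
    simp only [Pi.smul_apply, Pi.single_apply, smul_eq_mul, mul_ite, mul_one, mul_zero]
    exact Finset.sum_ite_eq τ j s
  set T : ℝ := ∑ j ∈ τ, s j ^ 2 with hT_def
  have hτ : τ.Nonempty := by
    by_contra h
    rw [Finset.not_nonempty_iff_eq_empty] at h
    have hlt : ∀ j : Fin n, s j ^ 2 < S / n := by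
      intro j
      by_contra hj
      have : j ∈ τ := Finset.mem_filter.mpr ⟨Finset.mem_univ j, le_of_not_gt hj⟩
      simp [h] at this
    have hcontra : S < S := by
      calc S = ∑ j : Fin n, s j ^ 2 := rfl
        _ < ∑ _j : Fin n, S / n :=
          Finset.sum_lt_sum_of_nonempty (Finset.univ_nonempty_iff.mpr
            ⟨⟨0, hn⟩⟩) fun j _ => hlt j
        _ = S := by
          rw [Finset.sum_const, Finset.card_univ, Fintype.card_fin, nsmul_eq_mul]
          field_simp
    exact lt_irrefl _ hcontra
  have hmemτ : ∀ j ∈ τ, S / n ≤ s j ^ 2 := fun j hj => (Finset.mem_filter.mp hj).2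
  have hT : 0 < T :=
    Finset.sum_pos (fun j hj => lt_of_lt_of_le (div_pos hS hnR) (hmemτ j hj)) hτ
  have hcard : (τ.card : ℝ) * S ≤ n * T := by
    have h1 : ∑ _j ∈ τ, S ≤ ∑ j ∈ τ, (n : ℝ) * s j ^ 2 := by
      refine Finset.sum_le_sum fun j hj => ?_
      rw [← div_le_iff₀' hnR]
      exact hmemτ j hj
    rw [Finset.sum_const, nsmul_eq_mul, ← Finset.mul_sum] at h1
    exact h1
  have hAtr : Aᵀ.mulVec r = -s := by
    have h1 : Aᵀ.mulVec r = (Aᵀ * A).mulVec x - (Aᵀ * A).mulVec xstar := by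
      rw [hr_def, Matrix.mulVec_sub, Matrix.mulVec_sub, Matrix.mulVec_mulVec,
        Matrix.mulVec_mulVec]
    rw [h1, hstar]
    show (Aᵀ * A).mulVec x - Aᵀ.mulVec b = -(Aᵀ.mulVec (b - A.mulVec x))
    rw [Matrix.mulVec_sub, ← Matrix.mulVec_mulVec]
    abel
  have hηs : η ⬝ᵥ s = T := by
    rw [dotProduct]
    rw [Finset.sum_congr rfl fun j _ => by rw [hη j, ite_mul, zero_mul]]
    rw [Finset.sum_ite_mem, Finset.univ_inter]
    exact Finset.sum_congr rfl fun j _ => (sq (s j)).symm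
  have hd : (A.mulVec η) ⬝ᵥ r = -T := by
    rw [dotProduct_comm, Matrix.dotProduct_mulVec, ← Matrix.mulVec_transpose,
      hAtr, neg_dotProduct, dotProduct_comm, hηs]
  have hu : A.mulVec η ≠ 0 := by
    intro h0
    rw [h0, zero_dotProduct] at hd
    linarith
  set c : ℝ := sqnorm (A.mulVec η) with hc_def
  have hc : 0 < c := sqnorm_pos hu
  have hPr : P.mulVec r = (c⁻¹ * ((A.mulVec η) ⬝ᵥ r)) • (A.mulVec η) := by
    have key : ∀ u w : Fin m → ℝ, (Matrix.vecMulVec u u).mulVec w = (u ⬝ᵥ w) • u := by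
      intro u w
      funext i
      simp only [Matrix.mulVec, Matrix.vecMulVec_apply, dotProduct, Pi.smul_apply,
        smul_eq_mul]
      rw [Finset.sum_mul]
      exact Finset.sum_congr rfl fun j _ => by ring
    show ((sqnorm (A.mulVec η))⁻¹ •
      Matrix.vecMulVec (A.mulVec η) (A.mulVec η)).mulVec r = _
    rw [Matrix.smul_mulVec, key, smul_smul, ← hc_def]
  have hLHS : sqnorm (P.mulVec r) = T ^ 2 / c := by
    rw [hPr, hd, sqnorm_smul, ← hc_def]
    field_simp
  have hAη : A.mulVec η = Aτ.mulVec (fun j : ↥τ => s (j : Fin n)) := by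
    funext i
    show (A.mulVec η) i = ∑ j : ↥τ, A i (j : Fin n) * s (j : Fin n)
    rw [Matrix.mulVec, dotProduct]
    rw [Finset.sum_congr rfl fun j _ => by rw [hη j, mul_ite, mul_zero]]
    rw [Finset.sum_ite_mem, Finset.univ_inter]
    exact (Finset.sum_coe_sort τ fun j => A i j * s j).symm
  have hyT : sqnorm (fun j : ↥τ => s (j : Fin n)) = T := by
    rw [sqnorm, hT_def]
    exact Finset.sum_coe_sort τ fun j => s j ^ 2
  have hc_le : c ≤ sigmaMax Aτ ^ 2 * T := by
    have h1 := le_sigmaMax Aτ (fun j : ↥τ => s (j : Fin n))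
    rw [← hAη] at h1
    have h2 := pow_le_pow_left₀ (enorm'_nonneg _) h1 2
    rwa [enorm'_sq, mul_pow, enorm'_sq, hyT, ← hc_def] at h2
  have hmax : 0 < sigmaMax Aτ ^ 2 := by nlinarith
  have hSmin : sigmaMin A ^ 2 * sqnorm r ≤ S := by
    have h3 : r ⬝ᵥ r = (-s) ⬝ᵥ (x - xstar) := by
      nth_rewrite 2 [hr_def]
      rw [Matrix.dotProduct_mulVec, ← Matrix.mulVec_transpose, hAtr]
    have hCS : sqnorm r ^ 2 ≤ S * sqnorm (x - xstar) := by
      rw [← dotProduct_self_eq_sqnorm, h3, dotProduct]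
      calc (∑ j, (-s) j * (x - xstar) j) ^ 2
          ≤ (∑ j, (-s) j ^ 2) * ∑ j, (x - xstar) j ^ 2 :=
            Finset.sum_mul_sq_le_sq_mul_sq Finset.univ _ _
        _ = S * sqnorm (x - xstar) := by
            rw [hS_def]; simp [sqnorm]
    have hmin := sigmaMin_mul_le A (x - xstar)
    rw [← hr_def] at hmin
    have hmin2 := pow_le_pow_left₀
      (mul_nonneg (sigmaMin_nonneg A) (enorm'_nonneg _)) hmin 2
    rw [mul_pow, enorm'_sq, enorm'_sq] at hmin2
    nlinarith [mul_le_mul_of_nonneg_left hCS (sq_nonneg (sigmaMin A)),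
      mul_le_mul_of_nonneg_left hmin2 hS.le, sqnorm_nonneg (x - xstar)]
  rw [ge_iff_le, hLHS, div_mul_eq_mul_div, div_le_div_iff₀ (by positivity) hc]
  calc (τ.card : ℝ) * sigmaMin A ^ 2 * sqnorm r * c
      = (τ.card : ℝ) * (sigmaMin A ^ 2 * sqnorm r) * c := by ring
    _ ≤ (τ.card : ℝ) * S * c := by
        have := mul_le_mul_of_nonneg_left hSmin
          (show (0:ℝ) ≤ (τ.card : ℝ) from Nat.cast_nonneg _)
        exact mul_le_mul_of_nonneg_right this hc.le
    _ ≤ (τ.card : ℝ) * S * (sigmaMax Aτ ^ 2 * T) :=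
        mul_le_mul_of_nonneg_left hc_le (by positivity)
    _ ≤ ((n : ℝ) * T) * (sigmaMax Aτ ^ 2 * T) :=
        mul_le_mul_of_nonneg_right hcard (by positivity)
    _ = T ^ 2 * ((n : ℝ) * sigmaMax Aτ ^ 2) := by ring
end
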